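/- arXiv:2106.02176 — 6 statements merged into one kernel-verified Lean document; each statement's English description precedes it below -/
import Mathlib

section
/- Let v : Fin n_n → EuclideanSpace ℝ (Fin 3) be any assignment of velocities to the nodes. Then Σ_{i : Fin n_e} (m i / 6) * (‖v (j i)‖² + ⟪v (j i), v (k i)⟫ + ‖v (k i)‖²) = (1/2) * Σ_{p : Fin n_n} Σ_{q : Fin n_n} (M̄ p q) * ⟪v p, v q⟫, where M̄ is the reduced mass matrix. In other words, the total kinetic energy of the uniform-mass elements equals the quadratic form (1/2) ṅᵀ M ṅ of the assembled consistent mass matrix M = M̄ ⊗ I₃. -/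
open scoped RealInnerProductSpace
open Matrix

lemma aux_indicator_sum {n : ℕ} (a b : Fin n) (h : a ≠ b) (F : Fin n → ℝ) :
    ∑ p, (if p = a then (1:ℝ) else if p = b then 1 else 0) * F p = F a + F b := by
  have h1 : ∀ p, (if p = a then (1:ℝ) else if p = b then 1 else 0) * F p
      = (if p = a then F a else 0) + (if p = b then F b else 0) := by
    intro p
    by_cases h1 : p = a <;> by_cases h2 : p = b <;>
      simp_all
  simp [h1, Finset.sum_add_distrib]

/-- The total kinetic energy of uniform-mass axial elements equals the quadratic form
`(1/2) ṅᵀ M ṅ` of the assembled consistent mass matrix, whose reduced (node-indexed)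
form is `M̄ = (1/6)(|C|ᵀ m̂ |C| + ⌊|C|ᵀ m̂ |C|⌋)`. -/
theorem kinetic_energy_eq_mass_quadratic_form {n_n n_e : ℕ}
    (j k : Fin n_e → Fin n_n) (hjk : ∀ i, j i ≠ k i)
    (m : Fin n_e → ℝ) (hm : ∀ i, 0 ≤ m i)
    (C : Matrix (Fin n_e) (Fin n_n) ℝ)
    (hC : ∀ i p, C i p = if p = k i then 1 else if p = j i then -1 else 0)
    (Mbar : Matrix (Fin n_n) (Fin n_n) ℝ)
    (hMbar : Mbar = (1/6 : ℝ) •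
      ((C.map abs)ᵀ * Matrix.diagonal m * (C.map abs) +
        Matrix.diagonal (fun p => ((C.map abs)ᵀ * Matrix.diagonal m * (C.map abs)) p p)))
    (v : Fin n_n → EuclideanSpace ℝ (Fin 3)) :
    ∑ i, (m i / 6) * (‖v (j i)‖ ^ 2 + ⟪v (j i), v (k i)⟫ + ‖v (k i)‖ ^ 2) =
      (1/2) * ∑ p, ∑ q, Mbar p q * ⟪v p, v q⟫ := by
  set W := C.map abs with hWdef
  set A := Wᵀ * Matrix.diagonal m * W with hAdef
  have hW : ∀ i p, W i p = (if p = k i then (1:ℝ) else if p = j i then 1 else 0) := by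
    intro i p
    simp only [hWdef, Matrix.map_apply, hC i p]
    split_ifs <;> simp
  have hA : ∀ p q, A p q = ∑ i, W i p * (m i * W i q) := by
    intro p q
    rw [hAdef, Matrix.mul_assoc, Matrix.mul_apply]
    simp [Matrix.diagonal_mul, Matrix.transpose_apply]
  -- per element collapse of the double sum
  have hcol : ∀ i : Fin n_e,
      (∑ p, ∑ q, (W i p * (m i * W i q)) * ⟪v p, v q⟫)
        = m i * (‖v (j i)‖ ^ 2 + 2 * ⟪v (j i), v (k i)⟫ + ‖v (k i)‖ ^ 2) := by
    intro i
    have hkj : k i ≠ j i := (hjk i).symm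
    have step1 : ∀ p, (∑ q, (W i p * (m i * W i q)) * ⟪v p, v q⟫)
        = W i p * m i * (⟪v p, v (k i)⟫ + ⟪v p, v (j i)⟫) := by
      intro p
      have := aux_indicator_sum (k i) (j i) hkj (fun q => W i p * m i * ⟪v p, v q⟫)
      rw [mul_add, ← this]
      apply Finset.sum_congr rfl
      intro q _
      rw [hW i q]
      ring
    simp only [step1]
    have := aux_indicator_sum (k i) (j i) hkj
      (fun p => m i * (⟪v p, v (k i)⟫ + ⟪v p, v (j i)⟫))
    have step2 : (∑ p, W i p * m i * (⟪v p, v (k i)⟫ + ⟪v p, v (j i)⟫))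
        = m i * (⟪v (k i), v (k i)⟫ + ⟪v (k i), v (j i)⟫)
          + m i * (⟪v (j i), v (k i)⟫ + ⟪v (j i), v (j i)⟫) := by
      rw [← this]
      apply Finset.sum_congr rfl
      intro p _
      rw [hW i p]
      ring
    rw [step2, real_inner_self_eq_norm_sq, real_inner_self_eq_norm_sq,
      real_inner_comm (v (k i)) (v (j i))]
    ring
  -- diagonal term per element
  have hdiag : (∑ p, A p p * ⟪v p, v p⟫)
      = ∑ i, m i * (‖v (j i)‖ ^ 2 + ‖v (k i)‖ ^ 2) := by
    have : ∀ p, A p p * ⟪v p, v p⟫ = ∑ i, (W i p * (m i * W i p)) * ⟪v p, v p⟫ := by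
      intro p; rw [hA, Finset.sum_mul]
    simp only [this]
    rw [Finset.sum_comm]
    apply Finset.sum_congr rfl
    intro i _
    have hkj : k i ≠ j i := (hjk i).symm
    have := aux_indicator_sum (k i) (j i) hkj (fun p => W i p * m i * ⟪v p, v p⟫)
    have step : (∑ p, (W i p * (m i * W i p)) * ⟪v p, v p⟫)
        = W (i) (k i) * m i * ⟪v (k i), v (k i)⟫ + W i (j i) * m i * ⟪v (j i), v (j i)⟫ := by
      rw [← this]
      apply Finset.sum_congr rfl
      intro p _
      rw [hW i p]
      split_ifs <;> ring
    rw [step, hW, hW, real_inner_self_eq_norm_sq, real_inner_self_eq_norm_sq]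
    simp [hkj]
    ring
  -- off-diagonal (full quadratic) term
  have hquad : (∑ p, ∑ q, A p q * ⟪v p, v q⟫)
      = ∑ i, m i * (‖v (j i)‖ ^ 2 + 2 * ⟪v (j i), v (k i)⟫ + ‖v (k i)‖ ^ 2) := by
    have : ∀ p q, A p q * ⟪v p, v q⟫ = ∑ i, (W i p * (m i * W i q)) * ⟪v p, v q⟫ := by
      intro p q; rw [hA, Finset.sum_mul]
    simp only [this]
    have swap : (∑ p, ∑ q, ∑ i, (W i p * (m i * W i q)) * ⟪v p, v q⟫)
        = ∑ i, ∑ p, ∑ q, (W i p * (m i * W i q)) * ⟪v p, v q⟫ := by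
      have step : (∑ p, ∑ q, ∑ i, (W i p * (m i * W i q)) * ⟪v p, v q⟫)
          = ∑ p, ∑ i, ∑ q, (W i p * (m i * W i q)) * ⟪v p, v q⟫ :=
        Finset.sum_congr rfl fun p _ => Finset.sum_comm
      rw [step]
      exact Finset.sum_comm
    rw [swap]
    exact Finset.sum_congr rfl fun i _ => hcol i
  -- expand Mbar
  have perp : ∀ p, (∑ q, Mbar p q * ⟪v p, v q⟫)
      = (1/6) * ((∑ q, A p q * ⟪v p, v q⟫) + A p p * ⟪v p, v p⟫) := by
    intro p
    rw [hMbar]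
    simp only [Matrix.smul_apply, Matrix.add_apply, Matrix.diagonal_apply, smul_eq_mul]
    have hterm : ∀ q, (1/6 : ℝ) * (A p q + if p = q then A p p else 0) * ⟪v p, v q⟫
        = 1/6 * (A p q * ⟪v p, v q⟫)
          + (if q = p then 1/6 * (A p p * ⟪v p, v p⟫) else 0) := by
      intro q
      by_cases h : p = q
      · subst h; simp; ring
      · simp [h, Ne.symm h, mul_assoc]
    simp only [hterm]
    rw [Finset.sum_add_distrib, Finset.sum_ite_eq' Finset.univ p
      (fun _ => 1/6 * (A p p * ⟪v p, v p⟫))]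
    simp [Finset.mul_sum, mul_add]
  have expand : (∑ p, ∑ q, Mbar p q * ⟪v p, v q⟫)
      = (1/6) * ((∑ p, ∑ q, A p q * ⟪v p, v q⟫) + ∑ p, A p p * ⟪v p, v p⟫) := by
    simp only [perp]
    rw [← Finset.mul_sum, Finset.sum_add_distrib]
  rw [expand, hquad, hdiag, ← Finset.sum_add_distrib, Finset.mul_sum, Finset.mul_sum]
  apply Finset.sum_congr rfl
  intro i _
  ring
end

section
/- Define the total strain potential energy V_e(n) = Σ_{i : Fin n_e} (E i * A i / (2 * l0 i)) * (l i n − l0 i)². If n is a nodal configuration with l i n ≠ 0 for every member i, then V_e is differentiable at n and its gradient in the Euclidean space of nodal vectors is the nodal vector p ↦ Σ_i (x i n) * (C i p) • (h i n); equivalently, ∇V_e(n) = K(n) n where K(n) = (Cᵀ x̂ C) ⊗ I₃ is the stiffness matrix built from the force densities x i n. -/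
/-!
The energy of member `i` depends on `n` only through its member vector `h i n = Σ_q C i q • n q`,
a linear image of `n`. On a single vector, `y ↦ c / (2 r) (‖y‖ - r)²` has gradient
`(c / r) (‖y‖ - r) y / ‖y‖ = c (1 / r - 1 / ‖y‖) y`, the force density times the vector. The chain
rule pulls this back through the adjoint of `m ↦ Σ_q c q • m q`, which is `u ↦ (c p • u)_p`, and
summing over the members gives the gradient.
-/

open scoped RealInnerProductSpace
open Matrix

noncomputable section

/-- The Euclidean space of nodal vectors of a structure with `n_n` nodes. -/
abbrev NodalSpace (n_n : ℕ) := PiLp 2 (fun _ : Fin n_n => EuclideanSpace ℝ (Fin 3))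

open InnerProductSpace

section InnerProductSpace

variable {F G : Type*} [NormedAddCommGroup F] [InnerProductSpace ℝ F]
  [NormedAddCommGroup G] [InnerProductSpace ℝ G]

theorem hasFDerivAt_norm {x : F} (hx : x ≠ 0) :
    HasFDerivAt (‖·‖) (‖x‖⁻¹ • innerSL ℝ x) x := by
  have hsq : ‖x‖ ^ 2 ≠ 0 := pow_ne_zero 2 (norm_ne_zero_iff.2 hx)
  have h := (Real.hasDerivAt_sqrt hsq).comp_hasFDerivAt x (hasStrictFDerivAt_norm_sq x).hasFDerivAt
  simp only [Function.comp_def, Real.sqrt_sq (norm_nonneg _)] at h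
  refine h.congr_fderiv ?_
  ext v
  simp only [one_div, _root_.mul_inv_rev, _root_.smul_apply, innerSL_apply_apply, nsmul_eq_mul,
    Nat.cast_ofNat, smul_eq_mul]
  field_simp

variable [CompleteSpace F]

theorem HasGradientAt.sum {ι : Type*} (s : Finset ι) {f : ι → F → ℝ} {g : ι → F} {x : F}
    (hf : ∀ i ∈ s, HasGradientAt (f i) (g i) x) :
    HasGradientAt (fun y => ∑ i ∈ s, f i y) (∑ i ∈ s, g i) x := by
  rw [hasGradientAt_iff_hasFDerivAt, map_sum]
  exact HasFDerivAt.fun_sum fun i hi => hasGradientAt_iff_hasFDerivAt.1 (hf i hi)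

theorem HasGradientAt.comp_continuousLinearMap [CompleteSpace G]
    {f : F → ℝ} {g : F} (T : G →L[ℝ] F) {x : G} (hf : HasGradientAt f g (T x)) :
    HasGradientAt (f ∘ T) (ContinuousLinearMap.adjoint T g) x := by
  rw [hasGradientAt_iff_hasFDerivAt] at hf ⊢
  refine (hf.comp x T.hasFDerivAt).congr_fderiv ?_
  ext v
  simp [ContinuousLinearMap.adjoint_inner_left]

theorem hasGradientAt_spring_energy (c : ℝ) {r : ℝ} (hr : r ≠ 0) {x : F} (hx : x ≠ 0) :
    HasGradientAt (fun y => c / (2 * r) * (‖y‖ - r) ^ 2) ((c * (1 / r - 1 / ‖x‖)) • x) x := by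
  have h := (((hasFDerivAt_norm hx).sub_const r).pow 2).const_mul (c / (2 * r))
  rw [hasGradientAt_iff_hasFDerivAt]
  refine h.congr_fderiv ?_
  ext v
  have hnorm : ‖x‖ ≠ 0 := norm_ne_zero_iff.2 hx
  simp only [Nat.add_one_sub_one, pow_one, nsmul_eq_mul, Nat.cast_ofNat,
    _root_.smul_apply, innerSL_apply_apply, smul_eq_mul, one_div, map_smul,
    toDual_apply_apply]
  field_simp

end InnerProductSpace

section WeightedSum

variable {ι E : Type*} [Fintype ι] [NormedAddCommGroup E] [InnerProductSpace ℝ E]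

def weightedSumL (c : ι → ℝ) : PiLp 2 (fun _ : ι => E) →L[ℝ] E :=
  ∑ q, c q • PiLp.proj 2 (fun _ : ι => E) q

theorem weightedSumL_apply (c : ι → ℝ) (m : PiLp 2 (fun _ : ι => E)) :
    weightedSumL c m = ∑ q, c q • m q := by
  simp [weightedSumL]

theorem weightedSumL_adjoint_apply [CompleteSpace E] (c : ι → ℝ) (u : E) :
    ContinuousLinearMap.adjoint (weightedSumL c) u = WithLp.toLp 2 (fun q => c q • u) := by
  refine ext_inner_right ℝ fun m => ?_
  simp [ContinuousLinearMap.adjoint_inner_left, weightedSumL_apply, PiLp.inner_apply, inner_sum,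
    real_inner_smul_left, real_inner_smul_right]

end WeightedSum

theorem hasGradientAt_strain_energy_general {n_n n_e : ℕ}
    (C : Matrix (Fin n_e) (Fin n_n) ℝ)
    (A E l0 : Fin n_e → ℝ)
    (hl0 : ∀ i, 0 < l0 i)
    (n : NodalSpace n_n)
    (hl : ∀ i, ‖∑ q, C i q • n q‖ ≠ 0) :
    HasGradientAt
      (fun n' : NodalSpace n_n =>
        ∑ i, (E i * A i / (2 * l0 i)) * (‖∑ q, C i q • n' q‖ - l0 i) ^ 2)
      ((WithLp.equiv 2 (∀ _ : Fin n_n, EuclideanSpace ℝ (Fin 3))).symm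
        fun p => ∑ i,
          ((E i * A i * (1 / l0 i - 1 / ‖∑ q, C i q • n q‖)) * C i p) • (∑ q, C i q • n q))
      n := by
  have member : ∀ i, HasGradientAt
      (fun n' : NodalSpace n_n => (E i * A i / (2 * l0 i)) * (‖∑ q, C i q • n' q‖ - l0 i) ^ 2)
      (WithLp.toLp 2 fun p => C i p •
        (E i * A i * (1 / l0 i - 1 / ‖∑ q, C i q • n q‖)) • (∑ q, C i q • n q)) n := by
    intro i
    have hspring := hasGradientAt_spring_energy (E i * A i) (hl0 i).ne'
      (x := weightedSumL (C i) n) (by simpa [weightedSumL_apply] using hl i)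
    simpa only [Function.comp_def, weightedSumL_apply, weightedSumL_adjoint_apply] using
      hspring.comp_continuousLinearMap (x := n)
  convert HasGradientAt.sum Finset.univ fun i _ => member i using 1
  ext p : 2
  simp [smul_smul, mul_comm]

/-- The total strain potential energy `V_e(n) = Σ_i (E i * A i / (2 l0 i)) (l i n − l0 i)²`
is differentiable at any configuration with all member lengths nonzero, and its gradient is
the nodal vector `p ↦ Σ_i (x i n) (C i p) • (h i n)`, i.e. `∇V_e(n) = K(n) n` where `K(n)`
is the stiffness matrix built from the force densities `x i n`. -/
theorem hasGradientAt_strain_energy {n_n n_e : ℕ}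
    (j k : Fin n_e → Fin n_n) (hjk : ∀ i, j i ≠ k i)
    (C : Matrix (Fin n_e) (Fin n_n) ℝ)
    (hC : ∀ i p, C i p = if p = k i then 1 else if p = j i then -1 else 0)
    (A E l0 : Fin n_e → ℝ)
    (hA : ∀ i, 0 < A i) (hE : ∀ i, 0 < E i) (hl0 : ∀ i, 0 < l0 i)
    (n : NodalSpace n_n)
    (hl : ∀ i, ‖∑ q, C i q • n q‖ ≠ 0) :
    HasGradientAt
      (fun n' : NodalSpace n_n =>
        ∑ i, (E i * A i / (2 * l0 i)) * (‖∑ q, C i q • n' q‖ - l0 i) ^ 2)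
      ((WithLp.equiv 2 (∀ _ : Fin n_n, EuclideanSpace ℝ (Fin 3))).symm
        fun p => ∑ i,
          ((E i * A i * (1 / l0 i - 1 / ‖∑ q, C i q • n q‖)) * C i p) • (∑ q, C i q • n q))
      n :=
  hasGradientAt_strain_energy_general C A E l0 hl0 n hl

end
end

section
/- For every nodal configuration n and every x : Fin n_e → ℝ, the matrix identity ((Cᵀ * diagonal x * C) ⊗ₖ I₃).mulVec ñ = ((Cᵀ ⊗ₖ I₃) * B(n)).mulVec x holds, where ñ : Fin n_n × Fin 3 → ℝ is the flattened nodal vector ñ (p, α) = (n p) α, ⊗ₖ is the Kronecker product of matrices, and B(n) : Matrix (Fin n_e × Fin 3) (Fin n_e) ℝ is the block-diagonal matrix with B(n) ((i, α), i') = if i = i' then (h i n) α else 0. Equivalently, K n = A₁ x with A₁ = (Cᵀ ⊗ₖ I₃) * B(n), so the nonlinear term K n is linear in the force density vector x. -/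
open Matrix
open scoped Kronecker

/-- The nonlinear term `K n` is linear in the force density vector: for every nodal
configuration `n` and force densities `x`,
`((Cᵀ x̂ C) ⊗ₖ I₃) ñ = ((Cᵀ ⊗ₖ I₃) * B(n)) x`, where `ñ` is the flattened nodal vector and
`B(n)` is the block-diagonal matrix of member vectors. -/
theorem Kn_linear_in_force_density {n_n n_e : ℕ}
    (j k : Fin n_e → Fin n_n) (hjk : ∀ i, j i ≠ k i)
    (C : Matrix (Fin n_e) (Fin n_n) ℝ)
    (hC : ∀ i p, C i p = if p = k i then 1 else if p = j i then -1 else 0)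
    (n : Fin n_n → EuclideanSpace ℝ (Fin 3)) (x : Fin n_e → ℝ) :
    ((Cᵀ * Matrix.diagonal x * C) ⊗ₖ (1 : Matrix (Fin 3) (Fin 3) ℝ)).mulVec
        (fun pα : Fin n_n × Fin 3 => n pα.1 pα.2) =
      ((Cᵀ ⊗ₖ (1 : Matrix (Fin 3) (Fin 3) ℝ)) *
        Matrix.of (fun iα : Fin n_e × Fin 3 => fun i' : Fin n_e =>
          if iα.1 = i' then (n (k iα.1) - n (j iα.1)) iα.2 else 0)).mulVec x := by
  have hC' : ∀ i q, C i q = (if q = k i then (1:ℝ) else 0) - (if q = j i then 1 else 0) := by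
    intro i q
    rw [hC]
    by_cases h1 : q = k i <;> by_cases h2 : q = j i <;>
      simp [h1, h2, hjk i, (hjk i).symm]
  have key : ∀ i α, ∑ q, C i q * n q α = n (k i) α - n (j i) α := by
    intro i α
    simp only [hC', sub_mul, ite_mul, one_mul, zero_mul, Finset.sum_sub_distrib,
      Finset.sum_ite_eq', Finset.mem_univ, if_true]
  funext pα
  obtain ⟨p, α⟩ := pα
  simp only [mulVec, dotProduct, mul_apply, kroneckerMap_apply, Matrix.one_apply,
    Fintype.sum_prod_type, transpose_apply, diagonal_apply, of_apply,
    PiLp.sub_apply]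
  simp only [mul_ite, mul_zero, mul_one, ite_mul, zero_mul, Finset.sum_ite_eq,
    Finset.sum_ite_eq', Finset.mem_univ, if_true]
  simp only [Finset.sum_mul]
  rw [Finset.sum_comm]
  refine Finset.sum_congr rfl fun i _ => ?_
  have hfac : ∑ q, (C i p * x i * C i q) * n q α = C i p * x i * ∑ q, C i q * n q α := by
    rw [Finset.mul_sum]; exact Finset.sum_congr rfl fun q _ => by ring
  rw [hfac, key]
  simp only [mul_ite, mul_zero]
  rw [Finset.sum_comm]
  simp [Finset.sum_ite_eq', Finset.sum_ite_eq]
  ring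
end

section
/- (Theorem 3: three equivalent forms of the static equilibrium equation.) Let n be a nodal configuration with l i n ≠ 0 for every member i, let x i = E i * A i * (1 / l0 i − 1 / (l i n)) be the force densities, t i = (l i n) * x i the member forces, and let f : Fin n_n × Fin 3 → ℝ be any applied nodal force vector (playing the role of f_ex − g). Then the following are equivalent: (1) ((Cᵀ * diagonal x * C) ⊗ₖ I₃).mulVec ñ = f, where ñ (p, α) = (n p) α; (2) A₁.mulVec x = f, where A₁ = (Cᵀ ⊗ₖ I₃) * B(n); (3) A₂.mulVec t = f, where A₂ = A₁ * (diagonal (fun i => l i n))⁻¹. -/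
open Matrix
open scoped Kronecker

/-- Block-diagonal matrix `B(n)` of member vectors: `B(n) ((i,α), i') = if i = i' then (h i n) α else 0`. -/
noncomputable def Bmat {n_n n_e : ℕ} (j k : Fin n_e → Fin n_n) (n : Fin n_n → EuclideanSpace ℝ (Fin 3)) :
    Matrix (Fin n_e × Fin 3) (Fin n_e) ℝ :=
  Matrix.of fun iα i' => if iα.1 = i' then (n (k iα.1) - n (j iα.1)) iα.2 else 0

lemma form12 {n_n n_e : ℕ}
    (j k : Fin n_e → Fin n_n) (hjk : ∀ i, j i ≠ k i)
    (C : Matrix (Fin n_e) (Fin n_n) ℝ)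
    (hC : ∀ i p, C i p = if p = k i then 1 else if p = j i then -1 else 0)
    (n : Fin n_n → EuclideanSpace ℝ (Fin 3))
    (x : Fin n_e → ℝ) :
    (((Cᵀ * Matrix.diagonal x * C) ⊗ₖ (1 : Matrix (Fin 3) (Fin 3) ℝ)).mulVec
        (fun pα : Fin n_n × Fin 3 => n pα.1 pα.2))
    = ((Cᵀ ⊗ₖ (1 : Matrix (Fin 3) (Fin 3) ℝ)) * Bmat j k n).mulVec x := by
  funext pα
  obtain ⟨p, α⟩ := pα
  simp only [Bmat, Matrix.mulVec, dotProduct, Matrix.mul_apply, Fintype.sum_prod_type,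
    Matrix.kroneckerMap_apply, Matrix.transpose_apply, Matrix.one_apply, Matrix.of_apply,
    Matrix.diagonal_apply, ite_mul, mul_ite, one_mul, zero_mul, mul_zero, mul_one,
    Finset.sum_ite_eq, Finset.sum_ite_eq', Finset.mem_univ, if_true]
  have key : ∀ i, (∑ q, C i q * n q α) = n (k i) α - n (j i) α := by
    intro i
    have : (∑ q, C i q * n q α) =
        ∑ q, ((if q = k i then n q α else 0) + (if q = j i then -n q α else 0)) := by
      apply Finset.sum_congr rfl
      intro q _
      rw [hC]
      by_cases h1 : q = k i <;> by_cases h2 : q = j i <;>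
        simp_all [ (hjk i).symm ]
    rw [this, Finset.sum_add_distrib]
    simp [sub_eq_add_neg]
  simp only [Finset.sum_mul]
  rw [Finset.sum_comm]
  simp
  apply Finset.sum_congr rfl
  intro i _
  rw [← key i, Finset.mul_sum, Finset.sum_mul]
  apply Finset.sum_congr rfl
  intro q _
  ring

/-- **Theorem 3 (three equivalent forms of the static equilibrium equation).**
With force densities `x`, member forces `t = l̂ x`, and applied nodal force `f`, the
following are equivalent: (1) `((Cᵀ x̂ C) ⊗ₖ I₃) ñ = f`; (2) `A₁ x = f` with
`A₁ = (Cᵀ ⊗ₖ I₃) B(n)`; (3) `A₂ t = f` with `A₂ = A₁ l̂⁻¹`. -/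
theorem static_equilibrium_three_forms {n_n n_e : ℕ}
    (j k : Fin n_e → Fin n_n) (hjk : ∀ i, j i ≠ k i)
    (C : Matrix (Fin n_e) (Fin n_n) ℝ)
    (hC : ∀ i p, C i p = if p = k i then 1 else if p = j i then -1 else 0)
    (A E l0 : Fin n_e → ℝ)
    (hA : ∀ i, 0 < A i) (hE : ∀ i, 0 < E i) (hl0 : ∀ i, 0 < l0 i)
    (n : Fin n_n → EuclideanSpace ℝ (Fin 3))
    (hl : ∀ i, ‖n (k i) - n (j i)‖ ≠ 0)
    (x t : Fin n_e → ℝ)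
    (hx : ∀ i, x i = E i * A i * (1 / l0 i - 1 / ‖n (k i) - n (j i)‖))
    (ht : ∀ i, t i = ‖n (k i) - n (j i)‖ * x i)
    (f : Fin n_n × Fin 3 → ℝ) :
    (((Cᵀ * Matrix.diagonal x * C) ⊗ₖ (1 : Matrix (Fin 3) (Fin 3) ℝ)).mulVec
        (fun pα : Fin n_n × Fin 3 => n pα.1 pα.2) = f ↔
      ((Cᵀ ⊗ₖ (1 : Matrix (Fin 3) (Fin 3) ℝ)) * Bmat j k n).mulVec x = f) ∧
    (((Cᵀ ⊗ₖ (1 : Matrix (Fin 3) (Fin 3) ℝ)) * Bmat j k n).mulVec x = f ↔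
      ((Cᵀ ⊗ₖ (1 : Matrix (Fin 3) (Fin 3) ℝ)) * Bmat j k n *
        (Matrix.diagonal fun i => ‖n (k i) - n (j i)‖)⁻¹).mulVec t = f) := by
  have hinv : (Matrix.diagonal fun i => ‖n (k i) - n (j i)‖)⁻¹
      = Matrix.diagonal fun i => (‖n (k i) - n (j i)‖)⁻¹ := by
    apply Matrix.inv_eq_right_inv
    rw [Matrix.diagonal_mul_diagonal]
    have : (fun i => ‖n (k i) - n (j i)‖ * ‖n (k i) - n (j i)‖⁻¹) = fun _ => (1:ℝ) :=
      funext fun i => mul_inv_cancel₀ (hl i)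
    rw [this, Matrix.diagonal_one]
  have h23 : ((Cᵀ ⊗ₖ (1 : Matrix (Fin 3) (Fin 3) ℝ)) * Bmat j k n *
        (Matrix.diagonal fun i => ‖n (k i) - n (j i)‖)⁻¹).mulVec t
      = ((Cᵀ ⊗ₖ (1 : Matrix (Fin 3) (Fin 3) ℝ)) * Bmat j k n).mulVec x := by
    have hdx : (Matrix.diagonal fun i => (‖n (k i) - n (j i)‖)⁻¹).mulVec t = x := by
      funext i
      rw [Matrix.mulVec_diagonal, ht i]
      rw [inv_mul_eq_div]
      exact mul_div_cancel_left₀ _ (hl i)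
    rw [hinv, ← Matrix.mulVec_mulVec, hdx]
  constructor
  · rw [form12 j k hjk C hC n x]
  · rw [h23]
end

section
/- (Compatibility equation.) Let n be a nodal configuration with l i n ≠ 0 for every member i. The member-length map ℓ : (Fin n_n → EuclideanSpace ℝ (Fin 3)) → EuclideanSpace ℝ (Fin n_e), (ℓ n) i = l i n, is differentiable at n, and its Fréchet derivative is the linear map δn ↦ (fun i => (1 / (l i n)) * ⟪h i n, Σ_q (C i q) • δn q⟫); that is, the Jacobian of ℓ at n is the compatibility matrix B_l whose (i, (p, α)) entry is (C i p) * (h i n) α / (l i n). -/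
/-! Each member length is `‖·‖` composed with the linear map `n ↦ Σ_q C i q • n q`; away from the
origin `‖x‖ = √(‖x‖²)` has derivative `‖x‖⁻¹ ⟪x, ·⟫`, and the chain rule gives row `i` of the
compatibility matrix. -/

open scoped RealInnerProductSpace

section NormDeriv

variable {G F : Type*} [NormedAddCommGroup G] [NormedSpace ℝ G]
  [NormedAddCommGroup F] [InnerProductSpace ℝ F]

theorem hasStrictFDerivAt_norm {x : F} (hx : x ≠ 0) :
    HasStrictFDerivAt (‖·‖) (‖x‖⁻¹ • innerSL ℝ x) x := by
  have hsqrt := (Real.hasStrictDerivAt_sqrt (pow_ne_zero 2 (norm_ne_zero_iff.mpr hx))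
    ).comp_hasStrictFDerivAt x (hasStrictFDerivAt_norm_sq x)
  simp only [Function.comp_def, Real.sqrt_sq (norm_nonneg _)] at hsqrt
  refine hsqrt.congr_fderiv ?_
  rw [← Nat.cast_smul_eq_nsmul ℝ, smul_smul, Nat.cast_ofNat]
  congr 1
  field_simp

theorem HasFDerivAt.norm {f : G → F} {f' : G →L[ℝ] F} {x : G} (hf : HasFDerivAt f f' x)
    (h0 : f x ≠ 0) :
    HasFDerivAt (fun y => ‖f y‖) (‖f x‖⁻¹ • (innerSL ℝ (f x)).comp f') x := by
  have := (hasStrictFDerivAt_norm h0).hasFDerivAt.comp x hf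
  rwa [ContinuousLinearMap.smul_comp] at this

end NormDeriv

section PiLp

variable {𝕜 G ι : Type*} [NontriviallyNormedField 𝕜] [NormedAddCommGroup G] [NormedSpace 𝕜 G]
  [Fintype ι] {β : ι → Type*} [∀ i, NormedAddCommGroup (β i)] [∀ i, NormedSpace 𝕜 (β i)]
  (p : ENNReal) [Fact (1 ≤ p)] {f : ∀ i, G → β i} {f' : ∀ i, G →L[𝕜] β i} {x : G}

theorem hasFDerivAt_toLp_pi (hf : ∀ i, HasFDerivAt (f i) (f' i) x) :
    HasFDerivAt (fun y => (WithLp.equiv p (∀ i, β i)).symm fun i => f i y)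
      ((PiLp.continuousLinearEquiv p 𝕜 β).symm.toContinuousLinearMap ∘L .pi f') x :=
  (PiLp.hasFDerivAt_toLp p _).comp x (hasFDerivAt_pi.2 hf)

theorem fderiv_toLp_pi_apply (hf : ∀ i, HasFDerivAt (f i) (f' i) x) (v : G) (i : ι) :
    fderiv 𝕜 (fun y => (WithLp.equiv p (∀ i, β i)).symm fun i => f i y) x v i = f' i v := by
  rw [(hasFDerivAt_toLp_pi p hf).fderiv]
  rfl

end PiLp

theorem compatibility_equation_general {n_n n_e : ℕ}
    (C : Matrix (Fin n_e) (Fin n_n) ℝ)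
    (n : NodalSpace n_n)
    (hl : ∀ i, ‖∑ q, C i q • n q‖ ≠ 0) :
    DifferentiableAt ℝ
      (fun n' : NodalSpace n_n =>
        ((WithLp.equiv 2 (∀ _ : Fin n_e, ℝ)).symm fun i => ‖∑ q, C i q • n' q‖ :
          EuclideanSpace ℝ (Fin n_e))) n ∧
    ∀ (δn : NodalSpace n_n) (i : Fin n_e),
      fderiv ℝ
        (fun n' : NodalSpace n_n =>
          ((WithLp.equiv 2 (∀ _ : Fin n_e, ℝ)).symm fun i => ‖∑ q, C i q • n' q‖ :
            EuclideanSpace ℝ (Fin n_e))) n δn i =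
        (1 / ‖∑ q, C i q • n q‖) * ⟪∑ q, C i q • n q, ∑ q, C i q • δn q⟫ := by
  have hmember (i : Fin n_e) : HasFDerivAt (fun n' : NodalSpace n_n => ∑ q, C i q • n' q)
      (∑ q, C i q • PiLp.proj 2 (𝕜 := ℝ) (fun _ => EuclideanSpace ℝ (Fin 3)) q) n :=
    HasFDerivAt.fun_sum fun q _ => (PiLp.hasFDerivAt_apply 2 n q).fun_const_smul (C i q)
  have hlength (i : Fin n_e) := (hmember i).norm (norm_ne_zero_iff.mp (hl i))
  refine ⟨(hasFDerivAt_toLp_pi 2 hlength).differentiableAt, fun δn i => ?_⟩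
  simp only [fderiv_toLp_pi_apply 2 hlength, smul_apply, ContinuousLinearMap.comp_apply,
    sum_apply, PiLp.proj_apply, innerSL_apply_apply, smul_eq_mul, one_div]

/-- **Compatibility equation.** The member-length map `ℓ : n ↦ (i ↦ l i n)` is differentiable
at any configuration with all member lengths nonzero, and its Fréchet derivative is
`δn ↦ (i ↦ (1 / l i n) ⟪h i n, Σ_q (C i q) • δn q⟫)`, i.e. the Jacobian of `ℓ` is the
compatibility matrix `B_l`. -/
theorem compatibility_equation {n_n n_e : ℕ}
    (j k : Fin n_e → Fin n_n) (hjk : ∀ i, j i ≠ k i)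
    (C : Matrix (Fin n_e) (Fin n_n) ℝ)
    (hC : ∀ i p, C i p = if p = k i then 1 else if p = j i then -1 else 0)
    (n : NodalSpace n_n)
    (hl : ∀ i, ‖∑ q, C i q • n q‖ ≠ 0) :
    DifferentiableAt ℝ
      (fun n' : NodalSpace n_n =>
        ((WithLp.equiv 2 (∀ _ : Fin n_e, ℝ)).symm fun i => ‖∑ q, C i q • n' q‖ :
          EuclideanSpace ℝ (Fin n_e))) n ∧
    ∀ (δn : NodalSpace n_n) (i : Fin n_e),
      fderiv ℝ
        (fun n' : NodalSpace n_n =>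
          ((WithLp.equiv 2 (∀ _ : Fin n_e, ℝ)).symm fun i => ‖∑ q, C i q • n' q‖ :
            EuclideanSpace ℝ (Fin n_e))) n δn i =
        (1 / ‖∑ q, C i q • n q‖) * ⟪∑ q, C i q • n q, ∑ q, C i q • δn q⟫ :=
  compatibility_equation_general C n hl
end

section
/- (Tangent stiffness matrix.) Let n be a nodal configuration with l i n ≠ 0 for every member i, and define the internal nodal force map F : (Fin n_n → EuclideanSpace ℝ (Fin 3)) → (Fin n_n → EuclideanSpace ℝ (Fin 3)) by (F n) p = Σ_i (x i n) * (C i p) • (h i n), i.e., F(n) = K(n) n. Then F is differentiable at n and its Fréchet derivative is the linear map δn ↦ (fun p => Σ_i (x i n) * (C i p) • (Σ_q (C i q) • δn q) + Σ_i (E i * A i * (l i n)⁻³ * ⟪h i n, Σ_q (C i q) • δn q⟫) * (C i p) • (h i n)); i.e., the tangent stiffness matrix is K_T = (Cᵀ x̂ C) ⊗ I₃ + A₁ Ê Â l̂⁻³ A₁ᵀ, the sum of the geometric stiffness K_G = (Cᵀ x̂ C) ⊗ I₃ and the material stiffness K_E = A₁ Ê Â l̂⁻³ A₁ᵀ. 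-/
/-!
Member `i` contributes `x_i(n) h_i(n)` to the nodal forces, distributed by `Cᵀ`, where the member
vector `h_i` is linear in `n` and the force density `x_i = EA_i (1 / l0_i - 1 / ‖h_i‖)` depends on
`n` only through `‖h_i‖`. The product rule splits the derivative into `x_i δh_i` (geometric
stiffness) and `dx_i(δh_i) h_i`, where `d(1 / ‖h‖)(δh) = -⟪h, δh⟫ / ‖h‖³` away from `h = 0`
(material stiffness).
-/

open scoped RealInnerProductSpace
open Matrix

noncomputable section

section Member

variable {F : Type*} [NormedAddCommGroup F] [InnerProductSpace ℝ F] {y : F}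

theorem hasFDerivAt_norm_of_ne_zero (hy : y ≠ 0) :
    HasFDerivAt (‖·‖) (‖y‖⁻¹ • innerSL ℝ y) y := by
  have hsq : ‖y‖ ^ 2 ≠ 0 := by positivity
  have h := (Real.hasDerivAt_sqrt hsq).comp_hasFDerivAt y (hasStrictFDerivAt_norm_sq y).hasFDerivAt
  simp only [Function.comp_def, Real.sqrt_sq (norm_nonneg _)] at h
  refine h.congr_fderiv ?_
  rw [← Nat.cast_smul_eq_nsmul ℝ, Nat.cast_ofNat, smul_smul]
  congr 1
  field_simp

theorem hasFDerivAt_inv_norm (hy : y ≠ 0) :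
    HasFDerivAt (fun v : F => ‖v‖⁻¹) (-(‖y‖ ^ 3)⁻¹ • innerSL ℝ y) y := by
  refine ((hasDerivAt_inv (norm_ne_zero_iff.mpr hy)).comp_hasFDerivAt y
    (hasFDerivAt_norm_of_ne_zero hy)).congr_fderiv ?_
  rw [smul_smul]
  congr 1
  field_simp

def forceDensity (EA l0 : ℝ) (v : F) : ℝ := EA * (1 / l0 - 1 / ‖v‖)

theorem hasFDerivAt_forceDensity (EA l0 : ℝ) (hy : y ≠ 0) :
    HasFDerivAt (forceDensity EA l0) ((EA * (‖y‖ ^ 3)⁻¹) • innerSL ℝ y) y := by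
  have hx : forceDensity EA l0 = fun v : F => EA * (1 / l0) - EA * ‖v‖⁻¹ := by
    funext v
    simp only [forceDensity]
    ring
  rw [hx]
  refine (((hasFDerivAt_inv_norm hy).const_mul EA).const_sub (EA * (1 / l0))).congr_fderiv ?_
  rw [smul_smul, ← neg_smul, mul_neg, neg_neg]

theorem hasFDerivAt_forceDensity_smul_self (EA l0 : ℝ) (hy : y ≠ 0) :
    HasFDerivAt (fun v : F => forceDensity EA l0 v • v)
      (forceDensity EA l0 y • ContinuousLinearMap.id ℝ F +
        ((EA * (‖y‖ ^ 3)⁻¹) • innerSL ℝ y).smulRight y) y :=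
  (hasFDerivAt_forceDensity EA l0 hy).smul (hasFDerivAt_id y)

end Member

section Truss

variable {ι m F : Type*} [NormedAddCommGroup F] [InnerProductSpace ℝ F]
  (C : Matrix m ι ℝ) (EA l0 : m → ℝ)

local notation "𝒩" => PiLp 2 (fun _ : ι => F)

def memberVector [Fintype ι] (i : m) : 𝒩 →L[ℝ] F :=
  ∑ q, C i q • PiLp.proj 2 (fun _ : ι => F) q

theorem memberVector_apply [Fintype ι] (i : m) (v : 𝒩) :
    memberVector C i v = ∑ q, C i q • v q := by
  simp [memberVector]

/-- The transpose of `memberVector C i`. -/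
def nodalLoad (i : m) : F →L[ℝ] 𝒩 :=
  (PiLp.continuousLinearEquiv 2 ℝ (fun _ : ι => F)).symm.toContinuousLinearMap ∘L
    ContinuousLinearMap.pi fun p => C i p • ContinuousLinearMap.id ℝ F

theorem nodalLoad_apply (i : m) (f : F) (p : ι) : nodalLoad C i f p = C i p • f := rfl

variable [Fintype ι] [Fintype m]

def nodalForce (n : 𝒩) : 𝒩 :=
  ∑ i, nodalLoad C i (forceDensity (EA i) (l0 i) (memberVector C i n) • memberVector C i n)

/-- `K_G = (Cᵀ x̂ C) ⊗ I`. -/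
def geometricStiffness (n : 𝒩) : 𝒩 →L[ℝ] 𝒩 :=
  ∑ i, forceDensity (EA i) (l0 i) (memberVector C i n) • (nodalLoad C i ∘L memberVector C i)

/-- `K_E = A₁ Ê Â l̂⁻³ A₁ᵀ`, with `A₁ = (Cᵀ ⊗ I) diag(h_i)`. -/
def materialStiffness (n : 𝒩) : 𝒩 →L[ℝ] 𝒩 :=
  ∑ i, (EA i * (‖memberVector C i n‖ ^ 3)⁻¹) •
    (nodalLoad C i ∘L (innerSL ℝ (memberVector C i n)).smulRight (memberVector C i n) ∘L
      memberVector C i)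

theorem hasFDerivAt_nodalForce {n : 𝒩} (hn : ∀ i, memberVector C i n ≠ 0) :
    HasFDerivAt (nodalForce C EA l0)
      (geometricStiffness C EA l0 n + materialStiffness C EA n) n := by
  have hmember := fun i => (nodalLoad C i).hasFDerivAt.comp n <|
    (hasFDerivAt_forceDensity_smul_self (EA i) (l0 i) (hn i)).comp n (memberVector C i).hasFDerivAt
  refine (HasFDerivAt.fun_sum fun i _ => hmember i).congr_fderiv ?_
  rw [geometricStiffness, materialStiffness, ← Finset.sum_add_distrib]
  refine Finset.sum_congr rfl fun i _ => ?_
  ext δ p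
  simp only [_root_.add_apply, ContinuousLinearMap.comp_apply, _root_.smul_apply,
    ContinuousLinearMap.smulRight_apply, ContinuousLinearMap.id_apply, innerSL_apply_apply,
    map_add, map_smul, PiLp.add_apply, PiLp.smul_apply, nodalLoad_apply]
  module

theorem fderiv_nodalForce {n : 𝒩} (hn : ∀ i, memberVector C i n ≠ 0) :
    fderiv ℝ (nodalForce C EA l0) n = geometricStiffness C EA l0 n + materialStiffness C EA n :=
  (hasFDerivAt_nodalForce C EA l0 hn).fderiv

theorem nodalForce_eq :
    nodalForce C EA l0 = fun n => (WithLp.toLp 2 fun p =>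
      ∑ i, (forceDensity (EA i) (l0 i) (memberVector C i n) * C i p) • memberVector C i n : 𝒩) := by
  ext n p
  simp only [nodalForce, WithLp.ofLp_sum, Finset.sum_apply, nodalLoad_apply, mul_comm, mul_smul]

theorem geometricStiffness_apply (n δ : 𝒩) (p : ι) :
    geometricStiffness C EA l0 n δ p =
      ∑ i, (forceDensity (EA i) (l0 i) (memberVector C i n) * C i p) • memberVector C i δ := by
  simp only [geometricStiffness, _root_.sum_apply, WithLp.ofLp_sum, Finset.sum_apply,
    _root_.smul_apply, PiLp.smul_apply, ContinuousLinearMap.comp_apply, nodalLoad_apply, mul_smul]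

theorem materialStiffness_apply (n δ : 𝒩) (p : ι) :
    materialStiffness C EA n δ p =
      ∑ i, (EA i * (‖memberVector C i n‖ ^ 3)⁻¹ * ⟪memberVector C i n, memberVector C i δ⟫ *
        C i p) • memberVector C i n := by
  simp only [materialStiffness, _root_.sum_apply, WithLp.ofLp_sum, Finset.sum_apply,
    _root_.smul_apply, PiLp.smul_apply, ContinuousLinearMap.comp_apply, nodalLoad_apply,
    ContinuousLinearMap.smulRight_apply, innerSL_apply_apply]
  exact Finset.sum_congr rfl fun i _ => by module

end Truss

theorem tangent_stiffness_general {n_n n_e : ℕ}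
    (C : Matrix (Fin n_e) (Fin n_n) ℝ)
    (A E l0 : Fin n_e → ℝ)
    (n : NodalSpace n_n)
    (hl : ∀ i, ‖∑ q, C i q • n q‖ ≠ 0) :
    DifferentiableAt ℝ
      (fun n' : NodalSpace n_n =>
        ((WithLp.equiv 2 (∀ _ : Fin n_n, EuclideanSpace ℝ (Fin 3))).symm
          (fun p => ∑ i,
            ((E i * A i * (1 / l0 i - 1 / ‖∑ q, C i q • n' q‖)) * C i p) •
              (∑ q, C i q • n' q)) : NodalSpace n_n)) n ∧
    ∀ (δn : NodalSpace n_n) (p : Fin n_n),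
      fderiv ℝ
        (fun n' : NodalSpace n_n =>
          ((WithLp.equiv 2 (∀ _ : Fin n_n, EuclideanSpace ℝ (Fin 3))).symm
            (fun p => ∑ i,
              ((E i * A i * (1 / l0 i - 1 / ‖∑ q, C i q • n' q‖)) * C i p) •
                (∑ q, C i q • n' q)) : NodalSpace n_n)) n δn p =
        (∑ i, ((E i * A i * (1 / l0 i - 1 / ‖∑ q, C i q • n q‖)) * C i p) •
            (∑ q, C i q • δn q)) +
        ∑ i, (E i * A i * (‖∑ q, C i q • n q‖ ^ 3)⁻¹ *
            ⟪∑ q, C i q • n q, ∑ q, C i q • δn q⟫ * C i p) • (∑ q, C i q • n q) := by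
  have hn : ∀ i, memberVector C i n ≠ 0 := fun i => by
    rw [← norm_ne_zero_iff, memberVector_apply]
    exact hl i
  have hF := hasFDerivAt_nodalForce C (fun i => E i * A i) l0 hn
  -- `hF.fderiv` would stall here: `ContinuousSMul` synthesis at the concrete space times out.
  have hD := fderiv_nodalForce C (fun i => E i * A i) l0 hn
  simp only [nodalForce_eq, memberVector_apply, forceDensity] at hF hD
  refine ⟨hF.differentiableAt, fun δn p => ?_⟩
  simp only [WithLp.equiv_symm_apply]
  rw [hD, _root_.add_apply, PiLp.add_apply, geometricStiffness_apply, materialStiffness_apply]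
  simp only [memberVector_apply, forceDensity]

/-- **Tangent stiffness matrix.** The internal nodal force map
`F(n) = K(n) n`, `(F n) p = Σ_i (x i n)(C i p) • (h i n)`, is differentiable at any
configuration with all member lengths nonzero, and its Fréchet derivative is the sum of the
geometric stiffness `K_G = (Cᵀ x̂ C) ⊗ I₃` and the material stiffness
`K_E = A₁ Ê Â l̂⁻³ A₁ᵀ`: `K_T = K_G + K_E`. -/
theorem tangent_stiffness {n_n n_e : ℕ}
    (j k : Fin n_e → Fin n_n) (hjk : ∀ i, j i ≠ k i)
    (C : Matrix (Fin n_e) (Fin n_n) ℝ)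
    (hC : ∀ i p, C i p = if p = k i then 1 else if p = j i then -1 else 0)
    (A E l0 : Fin n_e → ℝ)
    (hA : ∀ i, 0 < A i) (hE : ∀ i, 0 < E i) (hl0 : ∀ i, 0 < l0 i)
    (n : NodalSpace n_n)
    (hl : ∀ i, ‖∑ q, C i q • n q‖ ≠ 0) :
    DifferentiableAt ℝ
      (fun n' : NodalSpace n_n =>
        ((WithLp.equiv 2 (∀ _ : Fin n_n, EuclideanSpace ℝ (Fin 3))).symm
          (fun p => ∑ i,
            ((E i * A i * (1 / l0 i - 1 / ‖∑ q, C i q • n' q‖)) * C i p) •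
              (∑ q, C i q • n' q)) : NodalSpace n_n)) n ∧
    ∀ (δn : NodalSpace n_n) (p : Fin n_n),
      fderiv ℝ
        (fun n' : NodalSpace n_n =>
          ((WithLp.equiv 2 (∀ _ : Fin n_n, EuclideanSpace ℝ (Fin 3))).symm
            (fun p => ∑ i,
              ((E i * A i * (1 / l0 i - 1 / ‖∑ q, C i q • n' q‖)) * C i p) •
                (∑ q, C i q • n' q)) : NodalSpace n_n)) n δn p =
        (∑ i, ((E i * A i * (1 / l0 i - 1 / ‖∑ q, C i q • n q‖)) * C i p) •
            (∑ q, C i q • δn q)) +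
        ∑ i, (E i * A i * (‖∑ q, C i q • n q‖ ^ 3)⁻¹ *
            ⟪∑ q, C i q • n q, ∑ q, C i q • δn q⟫ * C i p) • (∑ q, C i q • n q) :=
  tangent_stiffness_general C A E l0 n hl
end
end
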